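/- Let n ≥ 1, let d₁, …, d_n < 0, m₁, …, m_n ≤ 0, L₁, …, L_n > 0, and let b₁, …, b_n : ℝ → ℝ be continuously differentiable. For k ∈ {1, …, n} define r_k(t,x) = Σ_{i=k}^n exp(m_k·x/d_k - Σ_{j=k}^i m_j·L_j/d_j)·b_i(t - x/d_k + Σ_{j=k}^i L_j/d_j). Then: (i) each r_k satisfies (r_k)_t + d_k·(r_k)_x = m_k·r_k; (ii) r_n(t, L_n) = b_n(t) for all t; and (iii) for each k ∈ {1, …, n-1}, r_k(t, L_k) = r_{k+1}(t, 0) + b_k(t) for all t. -/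

import Mathlib

/-! Up to constant factors and shifts, every summand of `r_k` is a travelling wave
`exp (m x / d) * f (t - x / d)`, which solves `u_t + d u_x = m u` for any differentiable `f`,
and the equation is linear. At `x = L_k` the phase and delay of the summand `i = k` cancel,
leaving `b_k t`, while the summands `i > k` become exactly those of `r_{k+1}` at `x = 0`. -/

open Finset Real

theorem Finset.sum_Icc_eq_add_sum_Icc_add_one {M : Type*} [AddCommMonoid M] {a c : ℕ}
    (h : a ≤ c) (f : ℕ → M) : ∑ j ∈ Icc a c, f j = f a + ∑ j ∈ Icc (a + 1) c, f j := by
  rw [← insert_Icc_add_one_left_eq_Icc h, sum_insert (by simp)]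

def SolvesTransport (d m : ℝ) (u : ℝ → ℝ → ℝ) : Prop :=
  ∀ t x : ℝ, ∃ ut ux : ℝ, HasDerivAt (fun s => u s x) ut t ∧ HasDerivAt (fun y => u t y) ux x ∧
    ut + d * ux = m * u t x

theorem SolvesTransport.sum {ι : Type*} {d m : ℝ} (s : Finset ι) {u : ι → ℝ → ℝ → ℝ}
    (h : ∀ i ∈ s, SolvesTransport d m (u i)) :
    SolvesTransport d m (fun t x => ∑ i ∈ s, u i t x) := by
  intro t x
  refine ⟨∑ i ∈ s, deriv (fun s => u i s x) t, ∑ i ∈ s, deriv (fun y => u i t y) x,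
    HasDerivAt.fun_sum fun i hi => ?_, HasDerivAt.fun_sum fun i hi => ?_, ?_⟩
  · obtain ⟨_, _, hut, -, -⟩ := h i hi t x
    exact hut.differentiableAt.hasDerivAt
  · obtain ⟨_, _, -, hux, -⟩ := h i hi t x
    exact hux.differentiableAt.hasDerivAt
  · rw [mul_sum, mul_sum, ← sum_add_distrib]
    refine sum_congr rfl fun i hi => ?_
    obtain ⟨_, _, hut, hux, hpde⟩ := h i hi t x
    rw [hut.deriv, hux.deriv, hpde]

theorem solvesTransport_exp_mul_comp {d : ℝ} (hd : d ≠ 0) (m α β : ℝ) {f : ℝ → ℝ}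
    (hf : Differentiable ℝ f) :
    SolvesTransport d m (fun t x => exp (m * x / d - α) * f (t - x / d + β)) := by
  intro t x
  have hφt : HasDerivAt (fun s => s - x / d + β) 1 t :=
    ((hasDerivAt_id t).sub_const _).add_const _
  have hφx : HasDerivAt (fun y => t - y / d + β) (-(1 / d)) x := by
    simpa using (((hasDerivAt_id x).div_const d).const_sub t).add_const β
  have hE : HasDerivAt (fun y => exp (m * y / d - α)) (exp (m * x / d - α) * (m / d)) x := by
    simpa using ((((hasDerivAt_id x).const_mul m).div_const d).sub_const α).exp
  have hf' := (hf (t - x / d + β)).hasDerivAt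
  refine ⟨_, _, (hf'.comp t hφt).const_mul _, hE.mul (hf'.comp x hφx), ?_⟩
  field_simp
  ring

section

variable (n : ℕ) (d m L : ℕ → ℝ) (b : ℕ → ℝ → ℝ)

/-- The explicit solution on pipe `k`: the injection `b i` at node `i ≥ k` reaches pipe `k`
after travelling through pipes `k, …, i`, delayed by `∑ L j / d j` and damped by
`exp (-∑ m j L j / d j)`. -/
noncomputable def pipeProfile (k : ℕ) (t x : ℝ) : ℝ :=
  ∑ i ∈ Icc k n, exp (m k * x / d k - ∑ j ∈ Icc k i, m j * L j / d j) *
    b i (t - x / d k + ∑ j ∈ Icc k i, L j / d j)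

theorem solvesTransport_pipeProfile {k : ℕ} (hd : d k ≠ 0)
    (hb : ∀ i ∈ Icc k n, Differentiable ℝ (b i)) :
    SolvesTransport (d k) (m k) (pipeProfile n d m L b k) :=
  SolvesTransport.sum _ fun i hi => solvesTransport_exp_mul_comp hd _ _ _ (hb i hi)

theorem pipeProfile_self (t : ℝ) : pipeProfile n d m L b n t (L n) = b n t := by
  simp [pipeProfile]

theorem pipeProfile_coupling {k : ℕ} (hk : k < n) (t : ℝ) :
    pipeProfile n d m L b k t (L k) = pipeProfile n d m L b (k + 1) t 0 + b k t := by
  unfold pipeProfile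
  rw [sum_Icc_eq_add_sum_Icc_add_one hk.le, add_comm]
  congr 1
  · refine sum_congr rfl fun i hi => ?_
    have hki : k ≤ i := by grind
    rw [sum_Icc_eq_add_sum_Icc_add_one hki, sum_Icc_eq_add_sum_Icc_add_one hki]
    ring_nf
  · simp

end

theorem stmt_13_general (n : ℕ) (d m L : ℕ → ℝ) (b : ℕ → ℝ → ℝ)
    (hd : ∀ k ∈ Finset.Icc 1 n, d k < 0)
    (hb : ∀ k ∈ Finset.Icc 1 n, ContDiff ℝ 1 (b k)) :
    let r : ℕ → ℝ → ℝ → ℝ := fun k t x =>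
      ∑ i ∈ Finset.Icc k n,
        Real.exp (m k * x / d k - ∑ j ∈ Finset.Icc k i, m j * L j / d j) *
          b i (t - x / d k + ∑ j ∈ Finset.Icc k i, L j / d j)
    (∀ k ∈ Finset.Icc 1 n, ∀ t x : ℝ, ∃ rt rx : ℝ,
        HasDerivAt (fun s => r k s x) rt t ∧
        HasDerivAt (fun y => r k t y) rx x ∧
        rt + d k * rx = m k * r k t x) ∧
    (∀ t : ℝ, r n t (L n) = b n t) ∧
    (∀ k ∈ Finset.Icc 1 (n - 1), ∀ t : ℝ, r k t (L k) = r (k + 1) t 0 + b k t) := by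
  intro r
  refine ⟨fun k hk => solvesTransport_pipeProfile n d m L b (hd k hk).ne fun i hi => ?_,
    pipeProfile_self n d m L b, fun k hk => pipeProfile_coupling n d m L b (by grind)⟩
  exact (hb i (by grind)).differentiable one_ne_zero

/-- Large-time part of Theorem 3: the explicit formula solves the coupled system of
transport equations on a linear graph of `n` pipes, with boundary condition at the
end of the last pipe and coupling conditions `r_k(t, L_k) = r_{k+1}(t,0) + b_k(t)`. -/
theorem stmt_13 (n : ℕ) (hn : 1 ≤ n) (d m L : ℕ → ℝ) (b : ℕ → ℝ → ℝ)
    (hd : ∀ k ∈ Finset.Icc 1 n, d k < 0) (hm : ∀ k ∈ Finset.Icc 1 n, m k ≤ 0)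
    (hL : ∀ k ∈ Finset.Icc 1 n, 0 < L k)
    (hb : ∀ k ∈ Finset.Icc 1 n, ContDiff ℝ 1 (b k)) :
    let r : ℕ → ℝ → ℝ → ℝ := fun k t x =>
      ∑ i ∈ Finset.Icc k n,
        Real.exp (m k * x / d k - ∑ j ∈ Finset.Icc k i, m j * L j / d j) *
          b i (t - x / d k + ∑ j ∈ Finset.Icc k i, L j / d j)
    (∀ k ∈ Finset.Icc 1 n, ∀ t x : ℝ, ∃ rt rx : ℝ,
        HasDerivAt (fun s => r k s x) rt t ∧
        HasDerivAt (fun y => r k t y) rx x ∧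
        rt + d k * rx = m k * r k t x) ∧
    (∀ t : ℝ, r n t (L n) = b n t) ∧
    (∀ k ∈ Finset.Icc 1 (n - 1), ∀ t : ℝ, r k t (L k) = r (k + 1) t 0 + b k t) :=
  stmt_13_general n d m L b hd hb
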